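/- arXiv:1602.01764 — 6 statements merged into one kernel-verified Lean document; each statement's English description precedes it below -/
import Mathlib

section
/- For a feasible solution x ∈ X ⊆ {0,1}^n, the scenario c^x defined by c^x_i = c̄_i if x_i = 1 and c^x_i = c̲_i otherwise maximizes the regret Reg(x,c) = val(x,c) - min_{y∈X} val(y,c) over all scenarios c in the box U = ∏_i [c̲_i, c̄_i]. -/
/-!
The regret difference `val x c - val y c = ∑ i, c i * (x i - y i)` is linear in the scenario `c`,
and for a 0/1 vector `x` and any `y ∈ [0,1]ⁿ` its coefficient `x i - y i` is nonnegative where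
`x i = 1` and nonpositive where `x i = 0`. So `c^x` maximizes every such difference over the box,
and comparing with a minimizer `y` of `val · c` gives `Reg x c ≤ Reg x c^x`.
-/

open Finset

lemma mul_sub_le_ite_mul_sub {l h c a b : ℝ} (hc : c ∈ Set.Icc l h) (ha : a = 0 ∨ a = 1)
    (hb : b ∈ Set.Icc 0 1) : c * (a - b) ≤ (if a = 1 then h else l) * (a - b) := by
  obtain ⟨hlc, hch⟩ := hc
  obtain ⟨hb0, hb1⟩ := hb
  rcases ha with rfl | rfl
  · simp only [zero_ne_one, if_false]
    nlinarith
  · simp only [if_true]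
    nlinarith

lemma sum_mul_sub_sum_mul_le {n : ℕ} {lo hi c cx x y : Fin n → ℝ}
    (hc : ∀ i, lo i ≤ c i ∧ c i ≤ hi i) (hcx : ∀ i, cx i = if x i = 1 then hi i else lo i)
    (hx : ∀ i, x i = 0 ∨ x i = 1) (hy : ∀ i, y i ∈ Set.Icc 0 1) :
    ∑ i, c i * x i - ∑ i, c i * y i ≤ ∑ i, cx i * x i - ∑ i, cx i * y i := by
  simp only [← sum_sub_distrib, ← mul_sub]
  refine sum_le_sum fun i _ => ?_
  rw [hcx i]
  exact mul_sub_le_ite_mul_sub (hc i) (hx i) (hy i)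

lemma Finset.sub_inf'_le_sub_inf' {ι : Type*} {s : Finset ι} (hs : s.Nonempty) {u v : ι → ℝ}
    {a b : ℝ} (h : ∀ y ∈ s, a - u y ≤ b - v y) : a - s.inf' hs u ≤ b - s.inf' hs v := by
  obtain ⟨y, hy, hyu⟩ := exists_mem_eq_inf' hs u
  rw [hyu]
  linarith [h y hy, inf'_le v hy]

/-- the extreme scenario `c^x` (taking the upper bound on elements of `x`
and the lower bound elsewhere) maximizes the regret of `x` over the box `U`. -/
theorem worst_scenario_for_solution
    (n : ℕ) (lo hi : Fin n → ℝ) (hlohi : ∀ i, lo i ≤ hi i)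
    (X : Finset (Fin n → ℝ)) (hX : X.Nonempty)
    (hbin : ∀ x ∈ X, ∀ i, x i = 0 ∨ x i = 1)
    (val : (Fin n → ℝ) → (Fin n → ℝ) → ℝ)
    (hval : ∀ x c, val x c = ∑ i, c i * x i)
    (Reg : (Fin n → ℝ) → (Fin n → ℝ) → ℝ)
    (hReg : ∀ x c, Reg x c = val x c - X.inf' hX (fun y => val y c))
    (x : Fin n → ℝ) (hx : x ∈ X)
    (cx : Fin n → ℝ) (hcx : ∀ i, cx i = if x i = 1 then hi i else lo i) :
    (∀ i, lo i ≤ cx i ∧ cx i ≤ hi i) ∧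
    ∀ c : Fin n → ℝ, (∀ i, lo i ≤ c i ∧ c i ≤ hi i) → Reg x c ≤ Reg x cx := by
  refine ⟨fun i => ?_, fun c hc => ?_⟩
  · rw [hcx i]
    split_ifs
    exacts [⟨hlohi i, le_rfl⟩, ⟨le_rfl, hlohi i⟩]
  · rw [hReg, hReg]
    refine sub_inf'_le_sub_inf' hX fun y hy => ?_
    have hy01 (i : Fin n) : y i ∈ Set.Icc 0 1 := by
      rcases hbin y hy i with h | h <;> simp [h]
    simpa only [hval] using sum_mul_sub_sum_mul_le hc hcx (hbin x hx) hy01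
end

section
/- Let P_X be a finitely supported probability distribution over X, t_i = ∑_{x∈X} P_X(x) x_i, and let y* ∈ X minimize ∑_i y_i (c̲_i + t_i(c̄_i - c̲_i)) over y ∈ X. Then the scenario c* defined by c*_i = c̲_i if y*_i = 1 and c̄_i otherwise maximizes the expected regret ∑_{x∈X} P_X(x) (val(x,c) - val*(c)) over all scenarios c ∈ U. -/
/-! The expected regret of `P_X` under `c` is `∑ c_i t_i - val*(c) = max_{y ∈ X} ∑ c_i (t_i - y_i)`.
Since `t_i ∈ [0,1]` and `y_i ∈ {0,1}`, each summand is maximised over `c_i ∈ [c̲_i, c̄_i]` by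
`c_i = c̲_i` if `y_i = 1` and `c_i = c̄_i` otherwise, with value `c̄_i t_i - y_i w_i` where
`w_i = c̲_i + t_i (c̄_i - c̲_i)`. Maximising `∑ c̄_i t_i - ∑ y_i w_i` over `y` is minimising
`∑ y_i w_i`, which `y*` does; and `c*` realises that bound. -/

open Finset

section

variable {ι : Type*} [Fintype ι]

theorem sum_mul_sum_mul_eq_sum_mul_sum (X : Finset (ι → ℝ)) (p : (ι → ℝ) → ℝ) (c : ι → ℝ) :
    ∑ x ∈ X, p x * ∑ i, c i * x i = ∑ i, c i * ∑ x ∈ X, p x * x i := by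
  simp only [mul_sum]
  rw [sum_comm]
  exact sum_congr rfl fun i _ => sum_congr rfl fun x _ => by ring

theorem sum_mul_sum_mul_sub_eq {X : Finset (ι → ℝ)} {p : (ι → ℝ) → ℝ}
    (hp1 : ∑ x ∈ X, p x = 1) (c : ι → ℝ) (v : ℝ) :
    ∑ x ∈ X, p x * (∑ i, c i * x i - v) = ∑ i, c i * ∑ x ∈ X, p x * x i - v := by
  simp only [mul_sub, sum_sub_distrib, ← sum_mul, hp1, one_mul,
    sum_mul_sum_mul_eq_sum_mul_sum]

theorem exists_sum_mul_sub_inf'_eq {X : Finset (ι → ℝ)} (hX : X.Nonempty) (c t : ι → ℝ) :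
    ∃ y ∈ X, ∑ i, c i * t i - X.inf' hX (fun y => ∑ i, c i * y i) = ∑ i, c i * (t i - y i) := by
  obtain ⟨y, hy, hinf⟩ := exists_mem_eq_inf' hX (fun y => ∑ i, c i * y i)
  exact ⟨y, hy, by simp only [hinf, mul_sub, sum_sub_distrib]⟩

theorem sum_mul_sub_le_sum_mul_sub_inf' {X : Finset (ι → ℝ)} (hX : X.Nonempty) (c t : ι → ℝ)
    {y : ι → ℝ} (hy : y ∈ X) :
    ∑ i, c i * (t i - y i) ≤ ∑ i, c i * t i - X.inf' hX (fun y => ∑ i, c i * y i) := by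
  simp only [mul_sub, sum_sub_distrib]
  linarith [inf'_le (fun y => ∑ i, c i * y i) hy]

end

theorem sum_mul_mem_Icc_zero_one {α : Type*} {X : Finset α} {p f : α → ℝ}
    (hp : ∀ x ∈ X, 0 ≤ p x) (hp1 : ∑ x ∈ X, p x = 1) (hf : ∀ x ∈ X, f x ∈ Set.Icc 0 1) :
    ∑ x ∈ X, p x * f x ∈ Set.Icc (0 : ℝ) 1 :=
  (convex_Icc 0 1).sum_mem hp hp1 hf

section

variable {lo hi c t y : ℝ}

theorem mul_sub_le_of_mem_Icc (hc : c ∈ Set.Icc lo hi) (ht : t ∈ Set.Icc 0 1)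
    (hy : y = 0 ∨ y = 1) : c * (t - y) ≤ hi * t - y * (lo + t * (hi - lo)) := by
  obtain ⟨hlo, hhi⟩ := hc
  obtain ⟨ht0, ht1⟩ := ht
  rcases hy with rfl | rfl <;> nlinarith

theorem ite_mul_sub_eq (hy : y = 0 ∨ y = 1) :
    (if y = 1 then lo else hi) * (t - y) = hi * t - y * (lo + t * (hi - lo)) := by
  rcases hy with rfl | rfl
  · simp only [zero_ne_one, if_false]; ring
  · simp only [if_true]; ring

end

theorem best_c_response_to_mixed_solution_general
    (n : ℕ) (lo hi : Fin n → ℝ)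
    (X : Finset (Fin n → ℝ)) (hX : X.Nonempty)
    (hbin : ∀ x ∈ X, ∀ i, x i = 0 ∨ x i = 1)
    (val : (Fin n → ℝ) → (Fin n → ℝ) → ℝ)
    (hval : ∀ x c, val x c = ∑ i, c i * x i)
    (valStar : (Fin n → ℝ) → ℝ)
    (hvalStar : ∀ c, valStar c = X.inf' hX (fun y => val y c))
    (p : (Fin n → ℝ) → ℝ) (hp : ∀ x ∈ X, 0 ≤ p x) (hp1 : ∑ x ∈ X, p x = 1)
    (t : Fin n → ℝ) (ht : ∀ i, t i = ∑ x ∈ X, p x * x i)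
    (ystar : Fin n → ℝ) (hystar : ystar ∈ X)
    (hmin : ∀ y ∈ X, ∑ i, ystar i * (lo i + t i * (hi i - lo i))
                      ≤ ∑ i, y i * (lo i + t i * (hi i - lo i)))
    (cstar : Fin n → ℝ) (hcstar : ∀ i, cstar i = if ystar i = 1 then lo i else hi i) :
    ∀ c : Fin n → ℝ, (∀ i, lo i ≤ c i ∧ c i ≤ hi i) →
      ∑ x ∈ X, p x * (val x c - valStar c)
        ≤ ∑ x ∈ X, p x * (val x cstar - valStar cstar) := by
  intro c hc
  have ht01 (i : Fin n) : t i ∈ Set.Icc 0 1 := ht i ▸ sum_mul_mem_Icc_zero_one hp hp1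
    fun x hx => by rcases hbin x hx i with h | h <;> simp [h]
  simp only [hvalStar, hval, sum_mul_sum_mul_sub_eq hp1, ← ht]
  obtain ⟨yhat, hyhat, hregret⟩ := exists_sum_mul_sub_inf'_eq hX c t
  calc ∑ i, c i * t i - X.inf' hX (fun y => ∑ i, c i * y i)
      = ∑ i, c i * (t i - yhat i) := hregret
    _ ≤ ∑ i, (hi i * t i - yhat i * (lo i + t i * (hi i - lo i))) :=
      sum_le_sum fun i _ => mul_sub_le_of_mem_Icc (hc i) (ht01 i) (hbin yhat hyhat i)
    _ ≤ ∑ i, (hi i * t i - ystar i * (lo i + t i * (hi i - lo i))) := by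
      simp only [sum_sub_distrib]
      linarith [hmin yhat hyhat]
    _ = ∑ i, cstar i * (t i - ystar i) :=
      sum_congr rfl fun i _ => by rw [hcstar, ite_mul_sub_eq (hbin ystar hystar i)]
    _ ≤ ∑ i, cstar i * t i - X.inf' hX (fun y => ∑ i, cstar i * y i) :=
      sum_mul_sub_le_sum_mul_sub_inf' hX cstar t hystar

/-- best c-response to a mixed solution strategy, Mastin et al.:
if `y*` minimizes `∑_i y_i (c̲_i + t_i(c̄_i - c̲_i))` over `X`, then the scenario `c*`
(with `c*_i = c̲_i` iff `y*_i = 1`) maximizes the expected regret of `P_X` over `U`. -/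
theorem best_c_response_to_mixed_solution
    (n : ℕ) (lo hi : Fin n → ℝ) (hlohi : ∀ i, lo i ≤ hi i)
    (X : Finset (Fin n → ℝ)) (hX : X.Nonempty)
    (hbin : ∀ x ∈ X, ∀ i, x i = 0 ∨ x i = 1)
    (val : (Fin n → ℝ) → (Fin n → ℝ) → ℝ)
    (hval : ∀ x c, val x c = ∑ i, c i * x i)
    (valStar : (Fin n → ℝ) → ℝ)
    (hvalStar : ∀ c, valStar c = X.inf' hX (fun y => val y c))
    (p : (Fin n → ℝ) → ℝ) (hp : ∀ x ∈ X, 0 ≤ p x) (hp1 : ∑ x ∈ X, p x = 1)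
    (t : Fin n → ℝ) (ht : ∀ i, t i = ∑ x ∈ X, p x * x i)
    (ystar : Fin n → ℝ) (hystar : ystar ∈ X)
    (hmin : ∀ y ∈ X, ∑ i, ystar i * (lo i + t i * (hi i - lo i))
                      ≤ ∑ i, y i * (lo i + t i * (hi i - lo i)))
    (cstar : Fin n → ℝ) (hcstar : ∀ i, cstar i = if ystar i = 1 then lo i else hi i) :
    ∀ c : Fin n → ℝ, (∀ i, lo i ≤ c i ∧ c i ≤ hi i) →
      ∑ x ∈ X, p x * (val x c - valStar c)
        ≤ ∑ x ∈ X, p x * (val x cstar - valStar cstar) :=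
  best_c_response_to_mixed_solution_general n lo hi X hX hbin val hval valStar hvalStar p hp hp1 t
    ht ystar hystar hmin cstar hcstar
end

section
/- In the instance with n = 2, cost intervals [5,10] and [7,12], and X = {(1,0),(0,1)}, the mixed scenario strategy playing (5,12) with probability 0.3 and (10,7) with probability 0.7 yields expected regret exactly 2.1 against both pure solutions (1,0) and (0,1); hence LB* ≥ 2.1 while LB_CG = 3/2. -/
open Finset

/-- A finitely supported probability distribution on the box `U = ∏ [lo i, hi i]`. -/
structure FinDistOnBox (n : ℕ) (lo hi : Fin n → ℝ) where
  supp : Finset (Fin n → ℝ)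
  nonempty : supp.Nonempty
  mem_box : ∀ c ∈ supp, ∀ i, lo i ≤ c i ∧ c i ≤ hi i
  w : (Fin n → ℝ) → ℝ
  w_nonneg : ∀ c ∈ supp, 0 ≤ w c
  w_sum : ∑ c ∈ supp, w c = 1

/-!
Against the scenario `(5,12)` solution `(1,0)` has regret `0` and `(0,1)` regret `7`;
against `(10,7)` they have regrets `3` and `0`. The weights `0.3, 0.7` equalise the two
expected regrets at `0.7 · 3 = 0.3 · 7 = 2.1`, which the two-point distribution therefore
guarantees. The centred strategies only guarantee `min (3/2) (7/2) = 3/2` and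
`min 0 2 = 0`.
-/

theorem Finset.inf'_pair {α β : Type*} [LinearOrder α] [DecidableEq β] (a b : β)
    (h : ({a, b} : Finset β).Nonempty) (f : β → α) :
    ({a, b} : Finset β).inf' h f = min (f a) (f b) := by
  simp

namespace FinDistOnBox

variable {n : ℕ} {lo hi : Fin n → ℝ}

theorem sum_mul_le (P : FinDistOnBox n lo hi) {f : (Fin n → ℝ) → ℝ} {M : ℝ}
    (hf : ∀ c, (∀ i, lo i ≤ c i ∧ c i ≤ hi i) → f c ≤ M) :
    ∑ c ∈ P.supp, P.w c * f c ≤ M :=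
  calc ∑ c ∈ P.supp, P.w c * f c ≤ ∑ c ∈ P.supp, P.w c * M :=
        sum_le_sum fun c hc => mul_le_mul_of_nonneg_left (hf c (P.mem_box c hc)) (P.w_nonneg c hc)
    _ = M := by rw [← sum_mul, P.w_sum, one_mul]

noncomputable def pair (a b : Fin n → ℝ) (hab : a ≠ b) (ha : ∀ i, lo i ≤ a i ∧ a i ≤ hi i)
    (hb : ∀ i, lo i ≤ b i ∧ b i ≤ hi i) (p : ℝ) (hp₀ : 0 ≤ p) (hp₁ : p ≤ 1) :
    FinDistOnBox n lo hi where
  supp := {a, b}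
  nonempty := insert_nonempty a {b}
  mem_box c hc := by
    rcases mem_insert.mp hc with rfl | hc
    exacts [ha, mem_singleton.mp hc ▸ hb]
  w c := if c = a then p else 1 - p
  w_nonneg c _ := by split_ifs <;> linarith
  w_sum := by rw [sum_pair hab, if_pos rfl, if_neg hab.symm]; ring

theorem sum_mul_pair {a b : Fin n → ℝ} (hab : a ≠ b) (ha : ∀ i, lo i ≤ a i ∧ a i ≤ hi i)
    (hb : ∀ i, lo i ≤ b i ∧ b i ≤ hi i) {p : ℝ} (hp₀ : 0 ≤ p) (hp₁ : p ≤ 1)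
    (f : (Fin n → ℝ) → ℝ) :
    let P := pair a b hab ha hb p hp₀ hp₁
    ∑ c ∈ P.supp, P.w c * f c = p * f a + (1 - p) * f b := by
  simp only [pair, sum_pair hab, if_neg hab.symm, if_true]

/-- The bound `hR` makes the supremum a genuine one: `⨆` of an unbounded family of reals is
the junk value `0`. -/
theorem inf'_le_iSup_inf' {ι : Type*} {X : Finset ι} (hX : X.Nonempty)
    (R : ι → (Fin n → ℝ) → ℝ) {x₀ : ι} (hx₀ : x₀ ∈ X) {M : ℝ}
    (hR : ∀ c, (∀ i, lo i ≤ c i ∧ c i ≤ hi i) → R x₀ c ≤ M) (P : FinDistOnBox n lo hi) :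
    X.inf' hX (fun x => ∑ c ∈ P.supp, P.w c * R x c) ≤
      ⨆ Q : FinDistOnBox n lo hi, X.inf' hX (fun x => ∑ c ∈ Q.supp, Q.w c * R x c) := by
  refine le_ciSup (f := fun Q : FinDistOnBox n lo hi =>
    X.inf' hX (fun x => ∑ c ∈ Q.supp, Q.w c * R x c)) ⟨M, ?_⟩ P
  rintro _ ⟨Q, rfl⟩
  exact inf'_le_of_le _ hx₀ (Q.sum_mul_le hR)

end FinDistOnBox

/-- in the instance with intervals `[5,10]`, `[7,12]` and
`X = {(1,0),(0,1)}`, the mixed scenario playing `(5,12)` w.p. `0.3` and `(10,7)` w.p.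
`0.7` yields expected regret exactly `2.1` against both pure solutions; hence
`LB* ≥ 2.1`, while `LB_CG = 3/2`. -/
theorem example_lbstar_gt_lbcg
    (X : Finset (Fin 2 → ℝ)) (hXdef : X = {![(1:ℝ),0], ![(0:ℝ),1]}) (hX : X.Nonempty)
    (val : (Fin 2 → ℝ) → (Fin 2 → ℝ) → ℝ)
    (hval : ∀ x c, val x c = ∑ i, c i * x i)
    (Reg : (Fin 2 → ℝ) → (Fin 2 → ℝ) → ℝ)
    (hReg : ∀ x c, Reg x c = val x c - X.inf' hX (fun y => val y c))
    (LBstar LBCG : ℝ)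
    (hLBstar : LBstar = ⨆ P : FinDistOnBox 2 ![(5:ℝ),7] ![(10:ℝ),12],
      X.inf' hX (fun x => ∑ c ∈ P.supp, P.w c * Reg x c))
    (hLBCG : LBCG = max
      (X.inf' hX (fun x => (1/2) * Reg x ![(5:ℝ),12] + (1/2) * Reg x ![(10:ℝ),7]))
      (X.inf' hX (fun x => (1/2) * Reg x ![(5:ℝ),7] + (1/2) * Reg x ![(10:ℝ),12]))) :
    (0.3 * Reg ![(1:ℝ),0] ![(5:ℝ),12] + 0.7 * Reg ![(1:ℝ),0] ![(10:ℝ),7] = 2.1) ∧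
    (0.3 * Reg ![(0:ℝ),1] ![(5:ℝ),12] + 0.7 * Reg ![(0:ℝ),1] ![(10:ℝ),7] = 2.1) ∧
    2.1 ≤ LBstar ∧ LBCG = 3/2 := by
  subst hXdef
  have hReg₁₀ (c : Fin 2 → ℝ) : Reg ![1,0] c = c 0 - min (c 0) (c 1) := by
    simp [hReg, hval]
  have hReg₀₁ (c : Fin 2 → ℝ) : Reg ![0,1] c = c 1 - min (c 0) (c 1) := by
    simp [hReg, hval]
  have hne : ![(5:ℝ),12] ≠ ![10,7] := fun h => by simpa using congrFun h 0
  have hmem₁ : ∀ i, ![(5:ℝ),7] i ≤ ![(5:ℝ),12] i ∧ ![(5:ℝ),12] i ≤ ![(10:ℝ),12] i := by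
    intro i; fin_cases i <;> norm_num
  have hmem₂ : ∀ i, ![(5:ℝ),7] i ≤ ![(10:ℝ),7] i ∧ ![(10:ℝ),7] i ≤ ![(10:ℝ),12] i := by
    intro i; fin_cases i <;> norm_num
  have hReg₁₀_le (c : Fin 2 → ℝ) (hc : ∀ i, ![(5:ℝ),7] i ≤ c i ∧ c i ≤ ![(10:ℝ),12] i) :
      Reg ![1,0] c ≤ 3 := by
    have := hc 0; have := hc 1
    simp only [Matrix.cons_val_zero, Matrix.cons_val_one] at *
    rw [hReg₁₀]; cases min_choice (c 0) (c 1) <;> linarith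
  refine ⟨by norm_num [hReg₁₀], by norm_num [hReg₀₁], ?_, ?_⟩
  · rw [hLBstar]
    refine le_trans ?_ (FinDistOnBox.inf'_le_iSup_inf' hX Reg (by simp) hReg₁₀_le
      (.pair _ _ hne hmem₁ hmem₂ 0.3 (by norm_num) (by norm_num)))
    simp only [FinDistOnBox.sum_mul_pair, Finset.inf'_pair, hReg₁₀, hReg₀₁]
    norm_num
  · rw [hLBCG]
    norm_num [Finset.inf'_pair, hReg₁₀, hReg₀₁]
end

section
/- Let x_mid minimize val(x, ĉ) over X, where ĉ_i = (c̲_i + c̄_i)/2. Then Reg(x_mid) ≤ 2·OPT, where Reg(x) = max_{c∈U}(val(x,c) - val*(c)) and OPT = min_{x∈X} Reg(x). -/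
open Finset Matrix

/-!
For a 0-1 vector `x`, the scenario `c^x` with cost `hi` on the support of `x` and `lo` off it
is the worst one for `x`, so `Reg(x) = max_{y ∈ X} F(x, y)` with `F(x, y) = c^x ⬝ (x - y)`.
On 0-1 vectors `F` satisfies the triangle inequality and `F(x, y) - F(y, x) = 2 ĉ ⬝ (x - y)`.
Hence, with `x*` optimal and `y` attaining `Reg(x_mid)`,
`Reg(x_mid) = F(x_mid, y) ≤ F(x_mid, x*) + F(x*, y) ≤ F(x*, x_mid) + F(x*, y) ≤ 2 Reg(x*)`.
-/

namespace IntervalRegret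

variable {ι : Type*} {lo hi x y z : ι → ℝ}

/-- On a 0-1 vector `x` this is `hi` on the support of `x` and `lo` off it. -/
def worstScenario (lo hi x : ι → ℝ) : ι → ℝ := fun i => lo i + (hi i - lo i) * x i

theorem worstScenario_mem (hlohi : ∀ i, lo i ≤ hi i) (hx : ∀ i, x i = 0 ∨ x i = 1) (i : ι) :
    lo i ≤ worstScenario lo hi x i ∧ worstScenario lo hi x i ≤ hi i := by
  rcases hx i with h | h <;> simp [worstScenario, h, hlohi i]

variable [Fintype ι]

def pairRegret (lo hi x y : ι → ℝ) : ℝ := worstScenario lo hi x ⬝ᵥ (x - y)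

theorem dotProduct_sub_le_pairRegret {c : ι → ℝ} (hc : ∀ i, lo i ≤ c i ∧ c i ≤ hi i)
    (hx : ∀ i, x i = 0 ∨ x i = 1) (hy : ∀ i, y i = 0 ∨ y i = 1) :
    c ⬝ᵥ (x - y) ≤ pairRegret lo hi x y := by
  refine Finset.sum_le_sum fun i _ => ?_
  simp only [worstScenario, Pi.sub_apply]
  rcases hx i with hxi | hxi <;> rcases hy i with hyi | hyi <;>
    simp only [hxi, hyi] <;> linarith [hc i]

theorem pairRegret_le_add (hlohi : ∀ i, lo i ≤ hi i) (hx : ∀ i, x i = 0 ∨ x i = 1)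
    (hy : ∀ i, y i = 0 ∨ y i = 1) (hz : ∀ i, z i = 0 ∨ z i = 1) :
    pairRegret lo hi x y ≤ pairRegret lo hi x z + pairRegret lo hi z y := by
  simp only [pairRegret, dotProduct, ← Finset.sum_add_distrib]
  refine Finset.sum_le_sum fun i _ => ?_
  simp only [worstScenario, Pi.sub_apply]
  rcases hx i with hxi | hxi <;> rcases hy i with hyi | hyi <;> rcases hz i with hzi | hzi <;>
    simp only [hxi, hyi, hzi] <;> linarith [hlohi i]

theorem pairRegret_sub_pairRegret (hx : ∀ i, x i = 0 ∨ x i = 1) (hy : ∀ i, y i = 0 ∨ y i = 1) :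
    pairRegret lo hi x y - pairRegret lo hi y x = (lo + hi) ⬝ᵥ (x - y) := by
  simp only [pairRegret, dotProduct, ← Finset.sum_sub_distrib]
  refine Finset.sum_congr rfl fun i _ => ?_
  simp only [worstScenario, Pi.sub_apply, Pi.add_apply]
  rcases hx i with hxi | hxi <;> rcases hy i with hyi | hyi <;> simp only [hxi, hyi] <;> ring

theorem pairRegret_le_swap_of_le {chat : ι → ℝ} (hchat : ∀ i, chat i = (lo i + hi i) / 2)
    (hx : ∀ i, x i = 0 ∨ x i = 1) (hy : ∀ i, y i = 0 ∨ y i = 1) (hxy : chat ⬝ᵥ x ≤ chat ⬝ᵥ y) :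
    pairRegret lo hi x y ≤ pairRegret lo hi y x := by
  have hsum : lo + hi = (2 : ℝ) • chat := by
    ext i
    simp only [Pi.add_apply, Pi.smul_apply, smul_eq_mul, hchat]
    ring
  have h := pairRegret_sub_pairRegret (lo := lo) (hi := hi) hx hy
  rw [hsum, smul_dotProduct, dotProduct_sub, smul_eq_mul] at h
  linarith

theorem iSup_regret_eq_sup' (hlohi : ∀ i, lo i ≤ hi i) {X : Finset (ι → ℝ)} (hX : X.Nonempty)
    (hbin : ∀ y ∈ X, ∀ i, y i = 0 ∨ y i = 1) (hx : x ∈ X) :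
    ⨆ c : {c : ι → ℝ // ∀ i, lo i ≤ c i ∧ c i ≤ hi i},
      (c.1 ⬝ᵥ x - X.inf' hX fun y => c.1 ⬝ᵥ y) = X.sup' hX (pairRegret lo hi x) := by
  have hle (c : {c : ι → ℝ // ∀ i, lo i ≤ c i ∧ c i ≤ hi i}) :
      c.1 ⬝ᵥ x - (X.inf' hX fun y => c.1 ⬝ᵥ y) ≤ X.sup' hX (pairRegret lo hi x) := by
    obtain ⟨y, hy, hy_min⟩ := X.exists_mem_eq_inf' hX fun y => c.1 ⬝ᵥ y
    rw [hy_min, ← dotProduct_sub]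
    exact (dotProduct_sub_le_pairRegret c.2 (hbin x hx) (hbin y hy)).trans (X.le_sup' _ hy)
  have : Nonempty {c : ι → ℝ // ∀ i, lo i ≤ c i ∧ c i ≤ hi i} := ⟨⟨lo, fun i => ⟨le_rfl, hlohi i⟩⟩⟩
  refine le_antisymm (ciSup_le hle) (Finset.sup'_le _ _ fun y hy => ?_)
  let cx : {c : ι → ℝ // ∀ i, lo i ≤ c i ∧ c i ≤ hi i} :=
    ⟨worstScenario lo hi x, worstScenario_mem hlohi (hbin x hx)⟩
  calc pairRegret lo hi x y = cx.1 ⬝ᵥ x - cx.1 ⬝ᵥ y := dotProduct_sub _ _ _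
    _ ≤ cx.1 ⬝ᵥ x - X.inf' hX fun y => cx.1 ⬝ᵥ y := by gcongr; exact X.inf'_le _ hy
    _ ≤ _ := le_ciSup ⟨_, Set.forall_mem_range.2 hle⟩ cx

end IntervalRegret

open IntervalRegret in
theorem midpoint_two_approximation_general
    (n : ℕ) (lo hi : Fin n → ℝ) (hlohi : ∀ i, lo i ≤ hi i)
    (X : Finset (Fin n → ℝ)) (hX : X.Nonempty)
    (hbin : ∀ x ∈ X, ∀ i, x i = 0 ∨ x i = 1)
    (val : (Fin n → ℝ) → (Fin n → ℝ) → ℝ)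
    (hval : ∀ x c, val x c = ∑ i, c i * x i)
    (MaxReg : (Fin n → ℝ) → ℝ)
    (hMaxReg : ∀ x, MaxReg x = ⨆ c : {c : Fin n → ℝ // ∀ i, lo i ≤ c i ∧ c i ≤ hi i},
      (val x c.1 - X.inf' hX (fun y => val y c.1)))
    (chat : Fin n → ℝ) (hchat : ∀ i, chat i = (lo i + hi i) / 2)
    (xmid : Fin n → ℝ) (hxmid : xmid ∈ X)
    (hmid : ∀ y ∈ X, val xmid chat ≤ val y chat)
    (OPT : ℝ) (hOPT : OPT = X.inf' hX MaxReg) :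
    MaxReg xmid ≤ 2 * OPT := by
  have hval' : ∀ x c, val x c = c ⬝ᵥ x := hval
  simp only [hval'] at hMaxReg hmid
  have hreg : ∀ x ∈ X, MaxReg x = X.sup' hX (pairRegret lo hi x) := fun x hx =>
    (hMaxReg x).trans (iSup_regret_eq_sup' hlohi hX hbin hx)
  obtain ⟨xopt, hxopt, hOPT_eq⟩ := X.exists_mem_eq_inf' hX MaxReg
  obtain ⟨y, hy, hy_max⟩ := X.exists_mem_eq_sup' hX (pairRegret lo hi xmid)
  have hpair_le_opt (z : Fin n → ℝ) (hz : z ∈ X) : pairRegret lo hi xopt z ≤ OPT := by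
    rw [hOPT, hOPT_eq, hreg xopt hxopt]
    exact X.le_sup' _ hz
  calc MaxReg xmid = pairRegret lo hi xmid y := by rw [hreg xmid hxmid, hy_max]
    _ ≤ pairRegret lo hi xmid xopt + pairRegret lo hi xopt y :=
      pairRegret_le_add hlohi (hbin _ hxmid) (hbin _ hy) (hbin _ hxopt)
    _ ≤ pairRegret lo hi xopt xmid + pairRegret lo hi xopt y := by
      gcongr
      exact pairRegret_le_swap_of_le hchat (hbin _ hxmid) (hbin _ hxopt) (hmid xopt hxopt)
    _ ≤ 2 * OPT := by linarith [hpair_le_opt xmid hxmid, hpair_le_opt y hy]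

/-- Kasperski–Zieliński: the midpoint solution is a 2-approximation for
minmax regret: `Reg(x_mid) ≤ 2·OPT`. -/
theorem midpoint_two_approximation
    (n : ℕ) (lo hi : Fin n → ℝ) (hlo : ∀ i, 0 ≤ lo i) (hlohi : ∀ i, lo i ≤ hi i)
    (X : Finset (Fin n → ℝ)) (hX : X.Nonempty)
    (hbin : ∀ x ∈ X, ∀ i, x i = 0 ∨ x i = 1)
    (val : (Fin n → ℝ) → (Fin n → ℝ) → ℝ)
    (hval : ∀ x c, val x c = ∑ i, c i * x i)
    (MaxReg : (Fin n → ℝ) → ℝ)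
    (hMaxReg : ∀ x, MaxReg x = ⨆ c : {c : Fin n → ℝ // ∀ i, lo i ≤ c i ∧ c i ≤ hi i},
      (val x c.1 - X.inf' hX (fun y => val y c.1)))
    (chat : Fin n → ℝ) (hchat : ∀ i, chat i = (lo i + hi i) / 2)
    (xmid : Fin n → ℝ) (hxmid : xmid ∈ X)
    (hmid : ∀ y ∈ X, val xmid chat ≤ val y chat)
    (OPT : ℝ) (hOPT : OPT = X.inf' hX MaxReg) :
    MaxReg xmid ≤ 2 * OPT :=
  midpoint_two_approximation_general n lo hi hlohi X hX hbin val hval MaxReg hMaxReg chat hchat xmid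
    hxmid hmid OPT hOPT
end

section
/- For any finitely supported distribution P_X over X inducing marginals t_i = ∑_x P_X(x) x_i, the maximum over y ∈ X of the expected regret E_{P_X}[Reg(X, ¬c^y)] equals ∑_i c̄_i t_i − min_{y∈X} ∑_i y_i (c̲_i + t_i(c̄_i − c̲_i)); moreover the maximum over all scenarios c ∈ U of E_{P_X}[Reg(X,c)] equals this same quantity. -/
/-!
The expected regret of a mixed strategy is linear in the strategy, so it equals the regret
`c ⬝ t - min_{z ∈ X} c ⬝ z` of its marginal vector `t ∈ [0,1]^n`, i.e. the maximum over `z ∈ X`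
of `c ⬝ (t - z)`. For a fixed binary `z`, the linear function `c ↦ c ⬝ (t - z)` is maximised on
the box at `¬c^z`, because `t_i - z_i` is `≥ 0` where `z_i = 0` and `≤ 0` where `z_i = 1`; its
value there is `∑ c̄_i t_i - ∑ z_i (c̲_i + t_i (c̄_i - c̲_i))`. Hence every scenario of the box has
expected regret at most the claimed quantity, and the scenario `¬c^y` for a minimiser `y` of
the second sum attains it, already through the choice `z = y`.
-/

open Finset

variable {ι : Type*}

/-- The scenario `¬c^y`. -/
noncomputable def oppositeScenario (lo hi y : ι → ℝ) : ι → ℝ :=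
  fun i => if y i = 1 then lo i else hi i

/-- The regret `Reg(t, c)` of a possibly fractional point `t`. -/
noncomputable def regret [Fintype ι] (X : Finset (ι → ℝ)) (hX : X.Nonempty) (t c : ι → ℝ) : ℝ :=
  ∑ i, c i * t i - X.inf' hX fun z => ∑ i, c i * z i

lemma oppositeScenario_mem_box {lo hi : ι → ℝ} (h : ∀ i, lo i ≤ hi i) (y : ι → ℝ) (i : ι) :
    lo i ≤ oppositeScenario lo hi y i ∧ oppositeScenario lo hi y i ≤ hi i := by
  unfold oppositeScenario
  split_ifs
  · exact ⟨le_rfl, h i⟩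
  · exact ⟨h i, le_rfl⟩

lemma sum_oppositeScenario_mul_sub [Fintype ι] {lo hi y : ι → ℝ} (hy : ∀ i, y i = 0 ∨ y i = 1)
    (t : ι → ℝ) :
    ∑ i, oppositeScenario lo hi y i * (t i - y i)
      = ∑ i, hi i * t i - ∑ i, y i * (lo i + t i * (hi i - lo i)) := by
  rw [← sum_sub_distrib]
  refine sum_congr rfl fun i _ => ?_
  rcases hy i with h | h <;> simp [oppositeScenario, h]; ring

lemma sum_mul_sub_le_oppositeScenario [Fintype ι] {lo hi c t z : ι → ℝ}
    (hc : ∀ i, lo i ≤ c i ∧ c i ≤ hi i) (ht : ∀ i, t i ∈ Set.Icc (0 : ℝ) 1)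
    (hz : ∀ i, z i = 0 ∨ z i = 1) :
    ∑ i, c i * (t i - z i) ≤ ∑ i, oppositeScenario lo hi z i * (t i - z i) := by
  refine sum_le_sum fun i _ => ?_
  rcases hz i with h | h
  · simpa [oppositeScenario, h] using mul_le_mul_of_nonneg_right (hc i).2 (ht i).1
  · simpa [oppositeScenario, h] using
      mul_le_mul_of_nonpos_right (hc i).1 (sub_nonpos.2 (ht i).2)

lemma regret_le_of_mem_box [Fintype ι] {X : Finset (ι → ℝ)} (hX : X.Nonempty)
    (hbin : ∀ x ∈ X, ∀ i, x i = 0 ∨ x i = 1) {lo hi c t : ι → ℝ}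
    (hc : ∀ i, lo i ≤ c i ∧ c i ≤ hi i) (ht : ∀ i, t i ∈ Set.Icc (0 : ℝ) 1) :
    regret X hX t c
      ≤ ∑ i, hi i * t i - X.inf' hX fun y => ∑ i, y i * (lo i + t i * (hi i - lo i)) := by
  obtain ⟨z, hz, hmin⟩ := exists_mem_eq_inf' hX fun z => ∑ i, c i * z i
  calc regret X hX t c = ∑ i, c i * (t i - z i) := by
        simp only [regret, hmin, mul_sub, sum_sub_distrib]
    _ ≤ ∑ i, oppositeScenario lo hi z i * (t i - z i) :=
        sum_mul_sub_le_oppositeScenario hc ht (hbin z hz)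
    _ = ∑ i, hi i * t i - ∑ i, z i * (lo i + t i * (hi i - lo i)) :=
        sum_oppositeScenario_mul_sub (hbin z hz) t
    _ ≤ _ := sub_le_sub_left (inf'_le (fun y => ∑ i, y i * (lo i + t i * (hi i - lo i))) hz) _

lemma le_regret_oppositeScenario [Fintype ι] {X : Finset (ι → ℝ)} (hX : X.Nonempty) {y : ι → ℝ}
    (hy : y ∈ X) (hbin : ∀ i, y i = 0 ∨ y i = 1) (lo hi t : ι → ℝ) :
    ∑ i, hi i * t i - ∑ i, y i * (lo i + t i * (hi i - lo i))
      ≤ regret X hX t (oppositeScenario lo hi y) := by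
  rw [← sum_oppositeScenario_mul_sub hbin, regret]
  simp only [mul_sub, sum_sub_distrib]
  exact sub_le_sub_left (inf'_le (fun z => ∑ i, oppositeScenario lo hi y i * z i) hy) _

lemma marginal_mem_Icc {X : Finset (ι → ℝ)} (hbin : ∀ x ∈ X, ∀ i, x i = 0 ∨ x i = 1)
    {p : (ι → ℝ) → ℝ} (hp : ∀ x ∈ X, 0 ≤ p x) (hp1 : ∑ x ∈ X, p x = 1) (i : ι) :
    ∑ x ∈ X, p x * x i ∈ Set.Icc (0 : ℝ) 1 := by
  have hxi : ∀ x ∈ X, x i ∈ Set.Icc (0 : ℝ) 1 := fun x hx => by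
    rcases hbin x hx i with h | h <;> simp [h]
  refine ⟨sum_nonneg fun x hx => mul_nonneg (hp x hx) (hxi x hx).1, hp1 ▸ ?_⟩
  exact sum_le_sum fun x hx => mul_le_of_le_one_right (hp x hx) (hxi x hx).2

lemma sum_mul_regret_eq_regret_marginal [Fintype ι] {X : Finset (ι → ℝ)} (hX : X.Nonempty)
    {p : (ι → ℝ) → ℝ} (hp1 : ∑ x ∈ X, p x = 1) (c : ι → ℝ) :
    ∑ x ∈ X, p x * regret X hX x c = regret X hX (fun i => ∑ x ∈ X, p x * x i) c := by
  simp only [regret, mul_sub, sum_sub_distrib, ← sum_mul, hp1, one_mul, mul_sum]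
  rw [sum_comm]
  simp only [mul_left_comm]

/-- for a mixed solution strategy with marginals `t`, the maximum expected
regret over scenarios of the form `¬c^y` (for `y ∈ X`) equals
`∑_i c̄_i t_i − min_{y∈X} ∑_i y_i (c̲_i + t_i(c̄_i − c̲_i))`, and the maximum of the
expected regret over the whole box `U` equals the same quantity. -/
theorem max_expected_regret_formula
    (n : ℕ) (lo hi : Fin n → ℝ) (hlohi : ∀ i, lo i ≤ hi i)
    (X : Finset (Fin n → ℝ)) (hX : X.Nonempty)
    (hbin : ∀ x ∈ X, ∀ i, x i = 0 ∨ x i = 1)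
    (val : (Fin n → ℝ) → (Fin n → ℝ) → ℝ)
    (hval : ∀ x c, val x c = ∑ i, c i * x i)
    (Reg : (Fin n → ℝ) → (Fin n → ℝ) → ℝ)
    (hReg : ∀ x c, Reg x c = val x c - X.inf' hX (fun z => val z c))
    (p : (Fin n → ℝ) → ℝ) (hp : ∀ x ∈ X, 0 ≤ p x) (hp1 : ∑ x ∈ X, p x = 1)
    (t : Fin n → ℝ) (ht : ∀ i, t i = ∑ x ∈ X, p x * x i)
    (neg : (Fin n → ℝ) → (Fin n → ℝ))
    (hneg : ∀ y i, neg y i = if y i = 1 then lo i else hi i)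
    (Q : ℝ)
    (hQ : Q = ∑ i, hi i * t i
      - X.inf' hX (fun y => ∑ i, y i * (lo i + t i * (hi i - lo i)))) :
    X.sup' hX (fun y => ∑ x ∈ X, p x * Reg x (neg y)) = Q ∧
    (⨆ c : {c : Fin n → ℝ // ∀ i, lo i ≤ c i ∧ c i ≤ hi i},
      ∑ x ∈ X, p x * Reg x c.1) = Q := by
  have hneg : neg = oppositeScenario lo hi := funext fun y => funext (hneg y)
  have ht : t = fun i => ∑ x ∈ X, p x * x i := funext ht
  have hE : ∀ c, ∑ x ∈ X, p x * Reg x c = regret X hX t c := fun c => by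
    rw [ht, ← sum_mul_regret_eq_regret_marginal hX hp1]
    simp only [hReg, hval, regret]
  have htIcc : ∀ i, t i ∈ Set.Icc (0 : ℝ) 1 := ht ▸ marginal_mem_Icc hbin hp hp1
  have hub : ∀ c, (∀ i, lo i ≤ c i ∧ c i ≤ hi i) → regret X hX t c ≤ Q :=
    fun c hc => hQ ▸ regret_le_of_mem_box hX hbin hc htIcc
  obtain ⟨y₀, hy₀, hmin⟩ :=
    exists_mem_eq_inf' hX fun y => ∑ i, y i * (lo i + t i * (hi i - lo i))
  have hlb : Q ≤ regret X hX t (neg y₀) :=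
    hQ ▸ hmin ▸ hneg ▸ le_regret_oppositeScenario hX hy₀ (hbin y₀ hy₀) lo hi t
  have hbox : ∀ y, ∀ i, lo i ≤ neg y i ∧ neg y i ≤ hi i :=
    hneg ▸ oppositeScenario_mem_box hlohi
  simp only [hE]
  constructor
  · exact le_antisymm (sup'_le _ _ fun y _ => hub _ (hbox y))
      (hlb.trans (le_sup' (fun y => regret X hX t (neg y)) hy₀))
  · have hbdd : BddAbove (Set.range fun c : {c : Fin n → ℝ // ∀ i, lo i ≤ c i ∧ c i ≤ hi i} =>
        regret X hX t c.1) := ⟨Q, by rintro _ ⟨c, rfl⟩; exact hub c c.2⟩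
    have : Nonempty {c : Fin n → ℝ // ∀ i, lo i ≤ c i ∧ c i ≤ hi i} := ⟨⟨neg y₀, hbox y₀⟩⟩
    exact le_antisymm (ciSup_le fun c => hub c c.2)
      (hlb.trans (le_ciSup hbdd ⟨neg y₀, hbox y₀⟩))
end

section
/- For all x ∈ X and all finitely supported distributions P_X over X with marginals y_i = ∑_{z∈X} P_X(z) z_i, the expected regret of x against the mixed scenario strategy P_U defined by P_U(¬c^z) = P_X(z) satisfies E_{P_U}[val(x,C)] − E_{P_U}[val*(C)] ≥ ∑_i x_i(c̲_i y_i + (1 − y_i) c̄_i) − ∑_i c̲_i y_i, with equality when each z in the support of P_X is optimal in scenario ¬c^z. -/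
open Finset

/-!
For a binary `z`, the scenario `¬c^z` has coordinates `c̲_i z_i + (1 - z_i) c̄_i`, which are affine
in `z`; averaging over `P_X` therefore turns the expected cost of `x` into its cost in the scenario
with coordinates `c̲_i y_i + (1 - y_i) c̄_i`. On the other hand `z` costs `∑_i c̲_i z_i` in its own
scenario `¬c^z`, which bounds `val*(¬c^z)` from above, with equality exactly when `z` is optimal
there; averaging gives `E[val*(C)] ≤ ∑_i c̲_i y_i`.
-/

section InducedScenario

variable {ι : Type*}

lemma ite_eq_one_eq_affine {t : ℝ} (ht : t = 0 ∨ t = 1) (a b : ℝ) :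
    (if t = 1 then a else b) = a * t + (1 - t) * b := by
  rcases ht with rfl | rfl <;> norm_num

lemma ite_eq_one_mul_self {t : ℝ} (ht : t = 0 ∨ t = 1) (a b : ℝ) :
    (if t = 1 then a else b) * t = a * t := by
  rcases ht with rfl | rfl <;> norm_num

variable {X : Finset (ι → ℝ)} (hbin : ∀ z ∈ X, ∀ i, z i = 0 ∨ z i = 1) (p : (ι → ℝ) → ℝ)
include hbin

lemma sum_mul_ite_eq_one (hp1 : ∑ z ∈ X, p z = 1) (i : ι) (a b : ℝ) :
    ∑ z ∈ X, p z * (if z i = 1 then a else b)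
      = a * (∑ z ∈ X, p z * z i) + (1 - ∑ z ∈ X, p z * z i) * b := by
  calc ∑ z ∈ X, p z * (if z i = 1 then a else b)
      = ∑ z ∈ X, (a * (p z * z i) + (p z - p z * z i) * b) :=
        sum_congr rfl fun z hz => by rw [ite_eq_one_eq_affine (hbin z hz i)]; ring
    _ = a * (∑ z ∈ X, p z * z i) + (1 - ∑ z ∈ X, p z * z i) * b := by
        rw [sum_add_distrib, ← mul_sum, ← sum_mul, sum_sub_distrib, hp1]

variable [Fintype ι]

lemma sum_mul_cost_induced_scenario (hp1 : ∑ z ∈ X, p z = 1) (lo hi x : ι → ℝ) :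
    ∑ z ∈ X, p z * ∑ i, (if z i = 1 then lo i else hi i) * x i
      = ∑ i, x i * (lo i * (∑ z ∈ X, p z * z i) + (1 - ∑ z ∈ X, p z * z i) * hi i) := by
  calc ∑ z ∈ X, p z * ∑ i, (if z i = 1 then lo i else hi i) * x i
      = ∑ i, ∑ z ∈ X, p z * ((if z i = 1 then lo i else hi i) * x i) := by
        simp only [mul_sum]; exact sum_comm
    _ = _ := sum_congr rfl fun i _ => by
        rw [← sum_mul_ite_eq_one hbin p hp1, mul_sum]
        exact sum_congr rfl fun z _ => by ring

lemma sum_mul_cost_own_scenario (lo hi : ι → ℝ) :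
    ∑ z ∈ X, p z * ∑ i, (if z i = 1 then lo i else hi i) * z i
      = ∑ i, lo i * ∑ z ∈ X, p z * z i := by
  simp_rw [mul_sum]
  rw [sum_comm]
  refine sum_congr rfl fun i _ => sum_congr rfl fun z hz => ?_
  rw [ite_eq_one_mul_self (hbin z hz i)]
  ring

end InducedScenario

theorem expected_regret_against_induced_scenario_strategy_general
    (n : ℕ) (lo hi : Fin n → ℝ)
    (X : Finset (Fin n → ℝ)) (hX : X.Nonempty)
    (hbin : ∀ x ∈ X, ∀ i, x i = 0 ∨ x i = 1)
    (val : (Fin n → ℝ) → (Fin n → ℝ) → ℝ)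
    (hval : ∀ x c, val x c = ∑ i, c i * x i)
    (valStar : (Fin n → ℝ) → ℝ)
    (hvalStar : ∀ c, valStar c = X.inf' hX (fun z => val z c))
    (p : (Fin n → ℝ) → ℝ) (hp : ∀ z ∈ X, 0 ≤ p z) (hp1 : ∑ z ∈ X, p z = 1)
    (y : Fin n → ℝ) (hy : ∀ i, y i = ∑ z ∈ X, p z * z i)
    (neg : (Fin n → ℝ) → (Fin n → ℝ))
    (hneg : ∀ z i, neg z i = if z i = 1 then lo i else hi i)
    (x : Fin n → ℝ) :
    (∑ z ∈ X, p z * (val x (neg z) - valStar (neg z))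
      ≥ ∑ i, x i * (lo i * y i + (1 - y i) * hi i) - ∑ i, lo i * y i) ∧
    ((∀ z ∈ X, p z ≠ 0 → val z (neg z) = valStar (neg z)) →
      ∑ z ∈ X, p z * (val x (neg z) - valStar (neg z))
        = ∑ i, x i * (lo i * y i + (1 - y i) * hi i) - ∑ i, lo i * y i) := by
  have hcost : ∑ z ∈ X, p z * val x (neg z) = ∑ i, x i * (lo i * y i + (1 - y i) * hi i) := by
    simp only [hval, hneg, hy]
    exact sum_mul_cost_induced_scenario hbin p hp1 lo hi x
  have hown : ∑ z ∈ X, p z * val z (neg z) = ∑ i, lo i * y i := by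
    simp only [hval, hneg, hy]
    exact sum_mul_cost_own_scenario hbin p lo hi
  have hsplit : ∑ z ∈ X, p z * (val x (neg z) - valStar (neg z))
      = ∑ z ∈ X, p z * val x (neg z) - ∑ z ∈ X, p z * valStar (neg z) := by
    simp only [mul_sub, sum_sub_distrib]
  refine ⟨?_, fun hopt => ?_⟩
  · have hle : ∑ z ∈ X, p z * valStar (neg z) ≤ ∑ z ∈ X, p z * val z (neg z) :=
      sum_le_sum fun z hz =>
        mul_le_mul_of_nonneg_left ((hvalStar _).trans_le (inf'_le _ hz)) (hp z hz)
    rw [ge_iff_le, hsplit, ← hcost, ← hown]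
    linarith
  · have heq : ∑ z ∈ X, p z * valStar (neg z) = ∑ z ∈ X, p z * val z (neg z) :=
      sum_congr rfl fun z hz => by
        rcases eq_or_ne (p z) 0 with hpz | hpz
        · simp only [hpz, zero_mul]
        · rw [hopt z hz hpz]
    rw [hsplit, hcost, heq, hown]

/-- the expected regret of a pure solution `x` against the scenario mixed
strategy `P_U(¬c^z) = P_X(z)` is at least
`∑_i x_i(c̲_i y_i + (1−y_i)c̄_i) − ∑_i c̲_i y_i`, with equality when every `z` in the
support of `P_X` is optimal in scenario `¬c^z`. -/
theorem expected_regret_against_induced_scenario_strategy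
    (n : ℕ) (lo hi : Fin n → ℝ) (hlohi : ∀ i, lo i ≤ hi i)
    (X : Finset (Fin n → ℝ)) (hX : X.Nonempty)
    (hbin : ∀ x ∈ X, ∀ i, x i = 0 ∨ x i = 1)
    (val : (Fin n → ℝ) → (Fin n → ℝ) → ℝ)
    (hval : ∀ x c, val x c = ∑ i, c i * x i)
    (valStar : (Fin n → ℝ) → ℝ)
    (hvalStar : ∀ c, valStar c = X.inf' hX (fun z => val z c))
    (p : (Fin n → ℝ) → ℝ) (hp : ∀ z ∈ X, 0 ≤ p z) (hp1 : ∑ z ∈ X, p z = 1)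
    (y : Fin n → ℝ) (hy : ∀ i, y i = ∑ z ∈ X, p z * z i)
    (neg : (Fin n → ℝ) → (Fin n → ℝ))
    (hneg : ∀ z i, neg z i = if z i = 1 then lo i else hi i)
    (x : Fin n → ℝ) (hx : x ∈ X) :
    (∑ z ∈ X, p z * (val x (neg z) - valStar (neg z))
      ≥ ∑ i, x i * (lo i * y i + (1 - y i) * hi i) - ∑ i, lo i * y i) ∧
    ((∀ z ∈ X, p z ≠ 0 → val z (neg z) = valStar (neg z)) →
      ∑ z ∈ X, p z * (val x (neg z) - valStar (neg z))
        = ∑ i, x i * (lo i * y i + (1 - y i) * hi i) - ∑ i, lo i * y i) :=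
  expected_regret_against_induced_scenario_strategy_general n lo hi X hX hbin val hval valStar
    hvalStar p hp hp1 y hy neg hneg x
end
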